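/- arXiv:2401.00657 — 9 statements merged into one kernel-verified Lean document; each statement's English description precedes it below -/
import Mathlib

section
/- There exists a vector c ∈ ℝⁿ, independent of k, such that for all k ≥ 1 the ADMM iterates satisfy the fixed-point recurrence u^{k+1} = (I+Q)·u^k + c, where Q = θ(P+θI)⁻¹((R+θI)⁻¹(θI−P) − I). -/
/-!
Eliminating the dual variable is the whole argument. Multiplying the `u`-update by `P + θI` and
adding it to `θ` times the `b`-update gives `θ b^{k+1} = μAᵀf - P u^{k+1}`, so `b^k` is an affine
function of `u^k` once `k ≥ 1`. Substituting this into the `w`- and `u`-updates expresses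
`u^{k+1}` affinely in `u^k`; writing the linear part as `(P + θI)⁻¹ (P + θ (R + θI)⁻¹ (θI - P))`
and splitting `P = (P + θI) - θI` turns it into `I + Q`.
-/

open Matrix

namespace Matrix

theorem PosSemidef.posDef_add_smul_one {ι : Type*} [DecidableEq ι] {S : Matrix ι ι ℝ}
    (hS : S.PosSemidef) {θ : ℝ} (hθ : 0 < θ) : (S + θ • (1 : Matrix ι ι ℝ)).PosDef :=
  PosDef.posSemidef_add hS (PosDef.one.smul hθ)

variable {ι K : Type*} [Fintype ι] [DecidableEq ι] [CommRing K]

theorem one_add_smul_nonsing_inv_mul_sub_one {P X : Matrix ι ι K} {θ : K}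
    (h : IsUnit (P + θ • (1 : Matrix ι ι K)).det) :
    1 + θ • ((P + θ • (1 : Matrix ι ι K))⁻¹ * (X - 1)) =
      (P + θ • (1 : Matrix ι ι K))⁻¹ * (P + θ • X) := by
  calc 1 + θ • ((P + θ • (1 : Matrix ι ι K))⁻¹ * (X - 1))
      = (P + θ • (1 : Matrix ι ι K))⁻¹ * (P + θ • 1) +
          (P + θ • (1 : Matrix ι ι K))⁻¹ * (θ • (X - 1)) := by
        rw [nonsing_inv_mul _ h, mul_smul_comm]
    _ = (P + θ • (1 : Matrix ι ι K))⁻¹ * (P + θ • X) := by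
        rw [← mul_add, smul_sub]
        abel_nf

end Matrix

section ADMM

variable {ι K : Type*} [Fintype ι] [DecidableEq ι] [CommRing K]
  {P N : Matrix ι ι K} {θ : K} {g : ι → K} {w u b : ℕ → ι → K}

theorem admm_smul_dual_succ_eq (hdet : IsUnit (P + θ • (1 : Matrix ι ι K)).det)
    (hu : ∀ k, u (k + 1) = (P + θ • (1 : Matrix ι ι K))⁻¹ *ᵥ (θ • w (k + 1) - θ • b k + g))
    (hb : ∀ k, b (k + 1) = b k + u (k + 1) - w (k + 1)) (k : ℕ) :
    θ • b (k + 1) = g - P *ᵥ u (k + 1) := by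
  have hprimal : (P + θ • (1 : Matrix ι ι K)) *ᵥ u (k + 1) = θ • w (k + 1) - θ • b k + g := by
    rw [hu k, mulVec_mulVec, mul_nonsing_inv _ hdet, one_mulVec]
  rw [add_mulVec, smul_mulVec, one_mulVec] at hprimal
  rw [hb k]
  linear_combination (norm := module) hprimal

theorem admm_primal_succ_succ_eq (hdet : IsUnit (P + θ • (1 : Matrix ι ι K)).det)
    (hw : ∀ k, w (k + 1) = N *ᵥ (θ • u k + θ • b k))
    (hu : ∀ k, u (k + 1) = (P + θ • (1 : Matrix ι ι K))⁻¹ *ᵥ (θ • w (k + 1) - θ • b k + g))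
    (hb : ∀ k, b (k + 1) = b k + u (k + 1) - w (k + 1)) (k : ℕ) :
    u (k + 2) = (1 + θ • ((P + θ • (1 : Matrix ι ι K))⁻¹ *
        (N * (θ • (1 : Matrix ι ι K) - P) - 1))) *ᵥ u (k + 1) +
      θ • (P + θ • (1 : Matrix ι ι K))⁻¹ *ᵥ (N *ᵥ g) := by
  rw [one_add_smul_nonsing_inv_mul_sub_one hdet, ← mulVec_mulVec, ← mulVec_smul, ← mulVec_add,
    hu (k + 1), hw (k + 1), admm_smul_dual_succ_eq hdet hu hb k]
  congr 1
  simp only [add_mulVec, sub_mulVec, smul_mulVec, ← mulVec_mulVec, one_mulVec, mulVec_add,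
    mulVec_sub, mulVec_smul, smul_add, smul_sub]
  abel

end ADMM

theorem admm_fixed_point_iteration_general {m n : ℕ} (θ μ : ℝ) (hθ : 0 < θ) (hμ : 0 < μ)
    (A : Matrix (Fin m) (Fin n) ℝ) (f : Fin m → ℝ)
    (P R Q : Matrix (Fin n) (Fin n) ℝ)
    (hP : P = μ • (Aᵀ * A))
    (hQ : Q = θ • ((P + θ • (1 : Matrix (Fin n) (Fin n) ℝ))⁻¹ *
      ((R + θ • (1 : Matrix (Fin n) (Fin n) ℝ))⁻¹ *
        (θ • (1 : Matrix (Fin n) (Fin n) ℝ) - P) - 1)))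
    (w u b : ℕ → (Fin n → ℝ))
    (hw : ∀ k, w (k + 1) =
      (R + θ • (1 : Matrix (Fin n) (Fin n) ℝ))⁻¹.mulVec (θ • u k + θ • b k))
    (hu : ∀ k, u (k + 1) =
      (P + θ • (1 : Matrix (Fin n) (Fin n) ℝ))⁻¹.mulVec
        (θ • w (k + 1) - θ • b k + μ • Aᵀ.mulVec f))
    (hb : ∀ k, b (k + 1) = b k + u (k + 1) - w (k + 1)) :
    ∃ c : Fin n → ℝ, ∀ k, 1 ≤ k →
      u (k + 1) = ((1 : Matrix (Fin n) (Fin n) ℝ) + Q).mulVec (u k) + c := by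
  have hPsd : P.PosSemidef := by
    rw [hP, ← conjTranspose_eq_transpose_of_trivial]
    exact (posSemidef_conjTranspose_mul_self A).smul hμ.le
  have hdet : IsUnit (P + θ • (1 : Matrix (Fin n) (Fin n) ℝ)).det :=
    (hPsd.posDef_add_smul_one hθ).det_pos.ne'.isUnit
  refine ⟨θ • (P + θ • (1 : Matrix (Fin n) (Fin n) ℝ))⁻¹ *ᵥ
    ((R + θ • (1 : Matrix (Fin n) (Fin n) ℝ))⁻¹ *ᵥ (μ • Aᵀ *ᵥ f)), fun k hk => ?_⟩
  obtain ⟨j, rfl⟩ := Nat.exists_eq_add_of_le' hk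
  rw [hQ]
  exact admm_primal_succ_succ_eq hdet hw hu hb j

/-- There exists a vector c ∈ ℝⁿ, independent of k, such that for all k ≥ 1 the ADMM
iterates satisfy the fixed-point recurrence u^{k+1} = (I+Q)·u^k + c, where
Q = θ(P+θI)⁻¹((R+θI)⁻¹(θI−P) − I). -/
theorem admm_fixed_point_iteration {m n : ℕ} (θ μ : ℝ) (hθ : 0 < θ) (hμ : 0 < μ)
    (A : Matrix (Fin m) (Fin n) ℝ) (L : Matrix (Fin n) (Fin n) ℝ) (f : Fin m → ℝ)
    (P R Q : Matrix (Fin n) (Fin n) ℝ)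
    (hP : P = μ • (Aᵀ * A)) (hR : R = Lᵀ * L)
    (hQ : Q = θ • ((P + θ • (1 : Matrix (Fin n) (Fin n) ℝ))⁻¹ *
      ((R + θ • (1 : Matrix (Fin n) (Fin n) ℝ))⁻¹ *
        (θ • (1 : Matrix (Fin n) (Fin n) ℝ) - P) - 1)))
    (w u b : ℕ → (Fin n → ℝ))
    (hw : ∀ k, w (k + 1) =
      (R + θ • (1 : Matrix (Fin n) (Fin n) ℝ))⁻¹.mulVec (θ • u k + θ • b k))
    (hu : ∀ k, u (k + 1) =
      (P + θ • (1 : Matrix (Fin n) (Fin n) ℝ))⁻¹.mulVec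
        (θ • w (k + 1) - θ • b k + μ • Aᵀ.mulVec f))
    (hb : ∀ k, b (k + 1) = b k + u (k + 1) - w (k + 1)) :
    ∃ c : Fin n → ℝ, ∀ k, 1 ≤ k →
      u (k + 1) = ((1 : Matrix (Fin n) (Fin n) ℝ) + Q).mulVec (u k) + c :=
  admm_fixed_point_iteration_general θ μ hθ hμ A f P R Q hP hQ w u b hw hu hb
end

section
/- For all k ≥ 0 the over-relaxed ADMM iterates satisfy θ·b^{k+1} = μ·Aᵀf − μ·AᵀA·u^{k+1}, and there exists a vector c ∈ ℝⁿ, independent of k, such that for all k ≥ 1, u^{k+1} = (I+αQ)·u^k + c, where Q = θ(P+θI)⁻¹((R+θI)⁻¹(θI−P) − I). -/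
/-!
Solving the `u`-update for `(P + θI) u^{k+1}` and substituting it into the `b`-update gives
`θ b^{k+1} = μAᵀf - P u^{k+1}`: the scaled dual variable is an affine function of the primal one.
From the second step on, this eliminates `b^k` (and with it `w^{k+1}`) from the `u`-update,
whose right-hand side becomes `(P + θI) u^k + αθ((R + θI)⁻¹(θI - P) - I) u^k + αθ(R + θI)⁻¹ μAᵀf`;
multiplying by `(P + θI)⁻¹` gives the affine recursion.
-/

open Matrix

section OverrelaxedADMMStep

variable {ι K : Type*} [Fintype ι] [DecidableEq ι] [CommRing K]
  {P : Matrix ι ι K} {θ α : K} {g u b w' u' : ι → K}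

theorem overrelaxedADMM_smul_dual_eq {b' : ι → K}
    (hu' : (P + θ • 1) *ᵥ u' = θ • (α • w' + (1 - α) • u) - θ • b + g)
    (hb' : b' = b + u' - α • w' - (1 - α) • u) :
    θ • b' = g - P *ᵥ u' := by
  rw [add_mulVec, smul_mulVec, one_mulVec] at hu'
  rw [hb']
  linear_combination (norm := module) hu'

theorem overrelaxedADMM_primal_eq_affine {S T : Matrix ι ι K} (hT : T * (P + θ • 1) = 1)
    (hb : θ • b = g - P *ᵥ u) (hw' : w' = S *ᵥ (θ • u + θ • b))
    (hu' : (P + θ • 1) *ᵥ u' = θ • (α • w' + (1 - α) • u) - θ • b + g) :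
    u' = (1 + α • (θ • (T * (S * (θ • 1 - P) - 1)))) *ᵥ u + (α * θ) • (T * S) *ᵥ g := by
  have hstep : (P + θ • 1) *ᵥ u' =
      (P + θ • 1) *ᵥ u + (α * θ) • ((S * (θ • 1 - P) - 1) *ᵥ u + S *ᵥ g) := by
    rw [hu', hw', hb]
    simp only [add_mulVec, sub_mulVec, smul_mulVec, one_mulVec, ← mulVec_mulVec,
      mulVec_add, mulVec_sub, mulVec_smul]
    module
  have hleft (v : ι → K) : T *ᵥ ((P + θ • 1) *ᵥ v) = v := by
    rw [mulVec_mulVec, hT, one_mulVec]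
  rw [← hleft u', hstep, mulVec_add, hleft]
  simp only [add_mulVec, smul_mulVec, one_mulVec, mulVec_add, mulVec_smul, ← mulVec_mulVec,
    smul_smul]
  module

end OverrelaxedADMMStep

theorem Matrix.PosSemidef.isUnit_add_smul_one {n K : Type*} [Fintype n] [DecidableEq n]
    [Field K] [PartialOrder K] [StarRing K] [StarOrderedRing K]
    {P : Matrix n n K} (hP : P.PosSemidef) {θ : K} (hθ : 0 < θ) : IsUnit (P + θ • 1) :=
  (PosDef.posSemidef_add hP (PosDef.one.smul hθ)).isUnit

theorem overrelaxed_admm_fixed_point_iteration_general {m n : ℕ} (θ μ α : ℝ)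
    (hθ : 0 < θ) (hμ : 0 < μ)
    (A : Matrix (Fin m) (Fin n) ℝ) (f : Fin m → ℝ)
    (P R Q : Matrix (Fin n) (Fin n) ℝ)
    (hP : P = μ • (Aᵀ * A))
    (hQ : Q = θ • ((P + θ • (1 : Matrix (Fin n) (Fin n) ℝ))⁻¹ *
      ((R + θ • (1 : Matrix (Fin n) (Fin n) ℝ))⁻¹ *
        (θ • (1 : Matrix (Fin n) (Fin n) ℝ) - P) - 1)))
    (w u b : ℕ → (Fin n → ℝ))
    (hw : ∀ k, w (k + 1) =
      (R + θ • (1 : Matrix (Fin n) (Fin n) ℝ))⁻¹.mulVec (θ • u k + θ • b k))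
    (hu : ∀ k, u (k + 1) =
      (P + θ • (1 : Matrix (Fin n) (Fin n) ℝ))⁻¹.mulVec
        (θ • (α • w (k + 1) + (1 - α) • u k) - θ • b k + μ • Aᵀ.mulVec f))
    (hb : ∀ k, b (k + 1) = b k + u (k + 1) - α • w (k + 1) - (1 - α) • u k) :
    (∀ k, θ • b (k + 1) = μ • Aᵀ.mulVec f - μ • (Aᵀ * A).mulVec (u (k + 1))) ∧
    ∃ c : Fin n → ℝ, ∀ k, 1 ≤ k →
      u (k + 1) = ((1 : Matrix (Fin n) (Fin n) ℝ) + α • Q).mulVec (u k) + c := by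
  have hAA : (Aᵀ * A).PosSemidef := by
    simpa only [conjTranspose_eq_transpose_of_trivial] using posSemidef_conjTranspose_mul_self A
  have hPsd : P.PosSemidef := hP ▸ hAA.smul hμ.le
  have hdet := (isUnit_iff_isUnit_det _).mp (hPsd.isUnit_add_smul_one hθ)
  have hPu (k : ℕ) : (P + θ • 1) *ᵥ u (k + 1) =
      θ • (α • w (k + 1) + (1 - α) • u k) - θ • b k + μ • Aᵀ *ᵥ f := by
    rw [hu, mulVec_mulVec, mul_nonsing_inv _ hdet, one_mulVec]
  have hdual (k : ℕ) : θ • b (k + 1) = μ • Aᵀ *ᵥ f - P *ᵥ u (k + 1) :=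
    overrelaxedADMM_smul_dual_eq (hPu k) (hb k)
  refine ⟨fun k => by rw [hdual, hP, smul_mulVec],
    (α * θ) • ((P + θ • 1)⁻¹ * (R + θ • 1)⁻¹) *ᵥ (μ • Aᵀ *ᵥ f), fun k hk => ?_⟩
  obtain ⟨j, rfl⟩ := Nat.exists_eq_add_of_le' hk
  rw [hQ]
  exact overrelaxedADMM_primal_eq_affine (nonsing_inv_mul _ hdet) (hdual j) (hw _) (hPu _)

/-- For all k ≥ 0 the over-relaxed ADMM iterates satisfy
θ·b^{k+1} = μ·Aᵀf − μ·AᵀA·u^{k+1}, and there exists a vector c ∈ ℝⁿ, independent of k,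
such that for all k ≥ 1, u^{k+1} = (I+αQ)·u^k + c, where
Q = θ(P+θI)⁻¹((R+θI)⁻¹(θI−P) − I). -/
theorem overrelaxed_admm_fixed_point_iteration {m n : ℕ} (θ μ α : ℝ)
    (hθ : 0 < θ) (hμ : 0 < μ) (hα : 0 < α)
    (A : Matrix (Fin m) (Fin n) ℝ) (L : Matrix (Fin n) (Fin n) ℝ) (f : Fin m → ℝ)
    (P R Q : Matrix (Fin n) (Fin n) ℝ)
    (hP : P = μ • (Aᵀ * A)) (hR : R = Lᵀ * L)
    (hQ : Q = θ • ((P + θ • (1 : Matrix (Fin n) (Fin n) ℝ))⁻¹ *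
      ((R + θ • (1 : Matrix (Fin n) (Fin n) ℝ))⁻¹ *
        (θ • (1 : Matrix (Fin n) (Fin n) ℝ) - P) - 1)))
    (w u b : ℕ → (Fin n → ℝ))
    (hw : ∀ k, w (k + 1) =
      (R + θ • (1 : Matrix (Fin n) (Fin n) ℝ))⁻¹.mulVec (θ • u k + θ • b k))
    (hu : ∀ k, u (k + 1) =
      (P + θ • (1 : Matrix (Fin n) (Fin n) ℝ))⁻¹.mulVec
        (θ • (α • w (k + 1) + (1 - α) • u k) - θ • b k + μ • Aᵀ.mulVec f))
    (hb : ∀ k, b (k + 1) = b k + u (k + 1) - α • w (k + 1) - (1 - α) • u k) :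
    (∀ k, θ • b (k + 1) = μ • Aᵀ.mulVec f - μ • (Aᵀ * A).mulVec (u (k + 1))) ∧
    ∃ c : Fin n → ℝ, ∀ k, 1 ≤ k →
      u (k + 1) = ((1 : Matrix (Fin n) (Fin n) ℝ) + α • Q).mulVec (u k) + c :=
  overrelaxed_admm_fixed_point_iteration_general θ μ α hθ hμ A f P R Q hP hQ w u b hw hu hb
end

section
/- (Theorem 1) Let θ>0, μ>0, A a real m×n matrix and L a real n×n matrix, and define Q = θ(μAᵀA+θI)⁻¹((LᵀL+θI)⁻¹(θI−μAᵀA) − I). Then every complex eigenvalue z of the ADMM iteration matrix I + Q satisfies |z| ≤ 1; that is, the spectral radius ρ(I+Q) ≤ 1, regardless of the value of θ. -/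
/-!
Conjugating by `P = μAᵀA + θI` turns `I + Q` into `½ (I + C(LᵀL) C(μAᵀA))`, where
`C(X) = (θI - X)(X + θI)⁻¹` is the Cayley transform. For `X` positive semidefinite, `C(X)` maps
`(X + θI) w` to `(θI - X) w`, and `‖θw - Xw‖ ≤ ‖θw + Xw‖` because `re ⟪θw, Xw⟫ ≥ 0`; so `C(X)` is a
contraction in the spectral norm. Hence `½ (I + C(LᵀL) C(μAᵀA))` has spectral norm at most `1`,
which bounds its eigenvalues, and those of the similar matrix `I + Q`.
-/

open Matrix

open scoped InnerProductSpace ComplexOrder MatrixOrder Matrix.Norms.L2Operator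

theorem norm_sub_le_norm_add_of_re_inner_nonneg {𝕜 E : Type*} [RCLike 𝕜] [NormedAddCommGroup E]
    [InnerProductSpace 𝕜 E] {x y : E} (h : 0 ≤ RCLike.re ⟪x, y⟫_𝕜) : ‖x - y‖ ≤ ‖x + y‖ := by
  have hsub := norm_sub_sq (𝕜 := 𝕜) x y
  have hadd := norm_add_sq (𝕜 := 𝕜) x y
  exact (sq_le_sq₀ (norm_nonneg _) (norm_nonneg _)).mp (by linarith)

theorem LinearMap.IsPositive.norm_smul_sub_le_norm_smul_add {𝕜 E : Type*} [RCLike 𝕜]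
    [NormedAddCommGroup E] [InnerProductSpace 𝕜 E] {T : E →ₗ[𝕜] E} (hT : T.IsPositive)
    {θ : ℝ} (hθ : 0 ≤ θ) (x : E) : ‖(θ : 𝕜) • x - T x‖ ≤ ‖(θ : 𝕜) • x + T x‖ := by
  refine norm_sub_le_norm_add_of_re_inner_nonneg (𝕜 := 𝕜) ?_
  rw [inner_smul_left, RCLike.conj_ofReal, RCLike.re_ofReal_mul]
  exact mul_nonneg hθ (hT.re_inner_nonneg_right x)

theorem SemiconjBy.spectrum_eq {R A : Type*} [CommSemiring R] [Ring A] [Algebra R A]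
    {u a b : A} (h : SemiconjBy u a b) (hu : IsUnit u) : spectrum R a = spectrum R b := by
  obtain ⟨u, rfl⟩ := hu
  have ha : a = ↑u⁻¹ * b * u := by rw [mul_assoc, ← h.eq, ← mul_assoc, u.inv_mul, one_mul]
  rw [ha, spectrum.units_conjugate']

namespace Matrix

section L2OpNorm

variable {𝕜 n : Type*} [RCLike 𝕜] [Fintype n] [DecidableEq n]

theorem l2_opNorm_one_le : ‖(1 : Matrix n n 𝕜)‖ ≤ 1 := by
  rw [← l2_opNorm_toEuclideanCLM, map_one]
  exact ContinuousLinearMap.norm_id_le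

theorem norm_le_l2_opNorm_of_mem_spectrum {M : Matrix n n 𝕜} {z : 𝕜}
    (hz : z ∈ spectrum 𝕜 M) : ‖z‖ ≤ ‖M‖ := by
  have hball := spectrum.subset_closedBall_norm_mul M hz
  rw [Metric.mem_closedBall, dist_zero_right] at hball
  exact hball.trans (mul_le_of_le_one_right (norm_nonneg _) l2_opNorm_one_le)

theorem PosSemidef.l2_opNorm_le_one_of_mul_add_smul_one {X C : Matrix n n 𝕜}
    (hX : X.PosSemidef) {θ : ℝ} (hθ : 0 < θ)
    (hC : C * (X + (θ : 𝕜) • 1) = (θ : 𝕜) • 1 - X) : ‖C‖ ≤ 1 := by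
  have hunit : IsUnit (X + (θ : 𝕜) • 1) :=
    (PosDef.posSemidef_add hX (PosDef.one.smul (RCLike.ofReal_pos.mpr hθ))).isUnit
  rw [← l2_opNorm_toEuclideanCLM]
  refine ContinuousLinearMap.opNorm_le_bound _ zero_le_one fun v => ?_
  set w := toEuclideanCLM (n := n) (𝕜 := 𝕜) (X + (θ : 𝕜) • 1)⁻¹ v
  have hv : toEuclideanCLM (n := n) (𝕜 := 𝕜) (X + (θ : 𝕜) • 1) w = v := by
    rw [← mul_apply_eq_comp, ← map_mul,
      mul_nonsing_inv _ ((isUnit_iff_isUnit_det _).mp hunit), map_one, one_apply_eq_self]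
  have hCv : toEuclideanCLM (n := n) (𝕜 := 𝕜) C v
      = toEuclideanCLM (n := n) (𝕜 := 𝕜) ((θ : 𝕜) • 1 - X) w := by
    rw [← hv, ← mul_apply_eq_comp, ← map_mul, hC]
  rw [one_mul, hCv, ← hv, map_add, map_sub, map_smul, map_one, add_comm]
  exact (isPositive_toEuclideanLin_iff.mpr hX).norm_smul_sub_le_norm_smul_add hθ.le w

end L2OpNorm

theorem PosSemidef.map_ofReal {n : Type*} [Fintype n] {M : Matrix n n ℝ}
    (hM : M.PosSemidef) : (M.map (algebraMap ℝ ℂ)).PosSemidef := by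
  classical
  obtain ⟨B, rfl⟩ := CStarAlgebra.nonneg_iff_eq_star_mul_self.mp hM.nonneg
  have hB : (star B).map (algebraMap ℝ ℂ) = (B.map (algebraMap ℝ ℂ))ᴴ := by ext; simp
  rw [Matrix.map_mul, hB]
  exact posSemidef_conjTranspose_mul_self _

end Matrix

section ADMM

variable {K n : Type*} [Field K] [Fintype n] [DecidableEq n]

noncomputable def cayleyTransform (θ : K) (X : Matrix n n K) : Matrix n n K :=
  (θ • 1 - X) * (X + θ • 1)⁻¹

/-- The iteration matrix `I + Q` of ADMM, with `S = μAᵀA` and `X = LᵀL`. -/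
noncomputable def admmIterationMatrix (θ : K) (S X : Matrix n n K) : Matrix n n K :=
  1 + θ • ((S + θ • 1)⁻¹ * ((X + θ • 1)⁻¹ * (θ • 1 - S) - 1))

theorem cayleyTransform_mul_add_smul_one {θ : K} {X : Matrix n n K} (hX : IsUnit (X + θ • 1)) :
    cayleyTransform θ X * (X + θ • 1) = θ • 1 - X := by
  rw [cayleyTransform, Matrix.mul_assoc, nonsing_inv_mul _ ((isUnit_iff_isUnit_det _).mp hX),
    Matrix.mul_one]

theorem add_smul_one_mul_admmIterationMatrix [CharZero K] {θ : K} {S X : Matrix n n K}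
    (hP : IsUnit (S + θ • 1)) (hR : IsUnit (X + θ • 1)) :
    (S + θ • 1) * admmIterationMatrix θ S X
      = (2⁻¹ : K) • (1 + cayleyTransform θ X * cayleyTransform θ S) * (S + θ • 1) := by
  rw [admmIterationMatrix, cayleyTransform, cayleyTransform]
  set P := S + θ • 1 with hP_def
  set R := X + θ • 1 with hR_def
  set M := R⁻¹ * (θ • 1 - S)
  have hX : (θ • 1 - X) * R⁻¹ = (2 * θ) • R⁻¹ - 1 := by
    rw [show θ • 1 - X = (2 * θ) • 1 - R by rw [hR_def]; module, Matrix.sub_mul, smul_one_mul,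
      mul_nonsing_inv R ((isUnit_iff_isUnit_det R).mp hR)]
  calc P * (1 + θ • (P⁻¹ * (M - 1)))
      = P + θ • M - θ • 1 := by
        rw [mul_add, mul_one, mul_smul_comm, ← Matrix.mul_assoc,
          mul_nonsing_inv P ((isUnit_iff_isUnit_det P).mp hP), Matrix.one_mul]
        module
    _ = (2⁻¹ : K) • (P + (2 * θ) • M - (θ • 1 - S)) := by rw [hP_def]; module
    _ = _ := by
      rw [hX, Matrix.smul_mul, Matrix.add_mul, Matrix.one_mul, Matrix.mul_assoc, Matrix.mul_assoc,
        nonsing_inv_mul P ((isUnit_iff_isUnit_det P).mp hP), Matrix.mul_one, Matrix.sub_mul,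
        Matrix.one_mul, Matrix.smul_mul, add_sub_assoc]

end ADMM

theorem Matrix.PosSemidef.l2_opNorm_map_cayleyTransform_le_one {n : Type*} [Fintype n]
    [DecidableEq n] {X : Matrix n n ℝ} (hX : X.PosSemidef) {θ : ℝ} (hθ : 0 < θ) :
    ‖(cayleyTransform θ X).map (algebraMap ℝ ℂ)‖ ≤ 1 := by
  have hunit : IsUnit (X + θ • 1) := (PosDef.posSemidef_add hX (PosDef.one.smul hθ)).isUnit
  refine hX.map_ofReal.l2_opNorm_le_one_of_mul_add_smul_one hθ ?_
  have := congrArg (Algebra.ofId ℝ ℂ).mapMatrix (cayleyTransform_mul_add_smul_one hunit)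
  simp only [map_mul, map_add, map_sub, map_smul, map_one, AlgHom.mapMatrix_apply] at this
  rwa [← Complex.coe_smul] at this

/-- (Theorem 1) Let θ>0, μ>0, A a real m×n matrix and L a real n×n matrix, and define
Q = θ(μAᵀA+θI)⁻¹((LᵀL+θI)⁻¹(θI−μAᵀA) − I). Then every complex eigenvalue z of the ADMM
iteration matrix I + Q satisfies |z| ≤ 1, i.e. ρ(I+Q) ≤ 1, regardless of θ. -/
theorem admm_spectral_radius_le_one {m n : ℕ} (θ μ : ℝ) (hθ : 0 < θ) (hμ : 0 < μ)
    (A : Matrix (Fin m) (Fin n) ℝ) (L : Matrix (Fin n) (Fin n) ℝ)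
    (Q : Matrix (Fin n) (Fin n) ℝ)
    (hQ : Q = θ • ((μ • (Aᵀ * A) + θ • (1 : Matrix (Fin n) (Fin n) ℝ))⁻¹ *
      ((Lᵀ * L + θ • (1 : Matrix (Fin n) (Fin n) ℝ))⁻¹ *
        (θ • (1 : Matrix (Fin n) (Fin n) ℝ) - μ • (Aᵀ * A)) - 1))) :
    ∀ z ∈ spectrum ℂ
      (((1 : Matrix (Fin n) (Fin n) ℝ) + Q).map (algebraMap ℝ ℂ)),
      ‖z‖ ≤ 1 := by
  intro z hz
  have hS : (μ • (Aᵀ * A)).PosSemidef :=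
    (by simpa using posSemidef_conjTranspose_mul_self A : (Aᵀ * A).PosSemidef).smul hμ.le
  have hX : (Lᵀ * L).PosSemidef := by simpa using posSemidef_conjTranspose_mul_self L
  have hP := (PosDef.posSemidef_add hS (PosDef.one.smul hθ)).isUnit
  have hR := (PosDef.posSemidef_add hX (PosDef.one.smul hθ)).isUnit
  let φ := (Algebra.ofId ℝ ℂ).mapMatrix (m := Fin n)
  have hsim := congrArg φ (add_smul_one_mul_admmIterationMatrix hP hR)
  rw [map_mul, map_mul] at hsim
  have hT : (1 + Q).map (algebraMap ℝ ℂ)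
      = φ (admmIterationMatrix θ (μ • (Aᵀ * A)) (Lᵀ * L)) := by
    rw [hQ]; rfl
  rw [hT, SemiconjBy.spectrum_eq hsim (hP.map φ)] at hz
  refine (norm_le_l2_opNorm_of_mem_spectrum hz).trans ?_
  have hC : ‖φ (cayleyTransform θ (Lᵀ * L) * cayleyTransform θ (μ • (Aᵀ * A)))‖ ≤ 1 := by
    rw [map_mul]
    exact (norm_mul_le _ _).trans (mul_le_one₀ (hX.l2_opNorm_map_cayleyTransform_le_one hθ)
      (norm_nonneg _) (hS.l2_opNorm_map_cayleyTransform_le_one hθ))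
  calc ‖φ ((2⁻¹ : ℝ) • (1 + cayleyTransform θ (Lᵀ * L) * cayleyTransform θ (μ • (Aᵀ * A))))‖
      ≤ 2⁻¹ * (1 + 1) := by
        rw [map_smul, norm_smul, map_add, map_one, Real.norm_of_nonneg (by norm_num)]
        gcongr
        exact (norm_add_le _ _).trans (add_le_add l2_opNorm_one_le hC)
    _ = 1 := by norm_num
end

section
/- Let θ>0, μ>0, A a real m×n matrix and L a real n×n matrix, and define Q = θ(μAᵀA+θI)⁻¹((LᵀL+θI)⁻¹(θI−μAᵀA) − I). Then every real eigenvalue λ of Q satisfies −1 ≤ λ ≤ 0. -/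
/-!
With `M = μAᵀA` and `S = LᵀL`, multiplying `Qx = λx` by `(S + θ)(M + θ)` gives
`λ(S + θ)(M + θ)x = -θ(M + S)x`. For `z = λMx + θ(1 + λ)x` this reads
`Sz = -θ(1 + λ)Mx - λθ²x`, and expanding `0 ≤ ⟨z, Sz⟩` yields
`0 ≤ -θ(λ(1 + λ)(‖Mx‖² + θ²‖x‖²) + θ((1 + λ)² + λ²)⟨x, Mx⟩)`.
Since `⟨x, Mx⟩ ≥ 0` and `x ≠ 0`, this forces `λ(1 + λ) ≤ 0`.
-/

open Matrix

namespace Matrix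

variable {ι : Type*} [Fintype ι]

lemma dotProduct_self_pos {x : ι → ℝ} (hx : x ≠ 0) : 0 < x ⬝ᵥ x :=
  lt_of_le_of_ne (by simpa using dotProduct_star_self_nonneg x)
    (Ne.symm (dotProduct_self_eq_zero.not.mpr hx))

lemma PosSemidef.dotProduct_mulVec_nonneg' {M : Matrix ι ι ℝ} (hM : M.PosSemidef) (v : ι → ℝ) :
    0 ≤ v ⬝ᵥ M *ᵥ v := by
  simpa using hM.dotProduct_mulVec_nonneg v

variable [DecidableEq ι]

noncomputable def admmIterationMatrix (θ : ℝ) (M S : Matrix ι ι ℝ) : Matrix ι ι ℝ :=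
  θ • ((M + θ • 1)⁻¹ * ((S + θ • 1)⁻¹ * (θ • 1 - M) - 1))

lemma mul_mul_admmIterationMatrix {θ : ℝ} {M S : Matrix ι ι ℝ}
    (hM : IsUnit (M + θ • 1).det) (hS : IsUnit (S + θ • 1).det) :
    (S + θ • 1) * ((M + θ • 1) * admmIterationMatrix θ M S) = -θ • (M + S) := by
  rw [admmIterationMatrix, mul_smul_comm, ← mul_assoc, mul_nonsing_inv _ hM, one_mul,
    mul_smul_comm, mul_sub, mul_nonsing_inv_cancel_left _ _ hS, mul_one]
  module

section GeneralizedEigenvector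

variable {θ lam : ℝ} {M S : Matrix ι ι ℝ} {x : ι → ℝ}
  (h : lam • ((S + θ • 1) *ᵥ ((M + θ • 1) *ᵥ x)) = -θ • ((M + S) *ᵥ x))
include h

lemma mulVec_smul_mulVec_add_smul_eq :
    S *ᵥ (lam • M *ᵥ x + (θ * (1 + lam)) • x) =
      -(θ * (1 + lam)) • M *ᵥ x - (lam * θ ^ 2) • x := by
  simp only [add_mulVec, mulVec_add, smul_mulVec, mulVec_smul, one_mulVec] at h ⊢
  linear_combination (norm := module) h

lemma dotProduct_mulVec_smul_mulVec_add_smul_eq :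
    let z := lam • M *ᵥ x + (θ * (1 + lam)) • x
    z ⬝ᵥ S *ᵥ z = -θ * (lam * (1 + lam) * (M *ᵥ x ⬝ᵥ M *ᵥ x + θ ^ 2 * x ⬝ᵥ x) +
      θ * ((1 + lam) ^ 2 + lam ^ 2) * x ⬝ᵥ M *ᵥ x) := by
  intro z
  rw [mulVec_smul_mulVec_add_smul_eq h]
  simp only [z, add_dotProduct, smul_dotProduct, dotProduct_smul, smul_eq_mul, dotProduct_sub]
  rw [dotProduct_comm (M *ᵥ x) x]
  ring

lemma mem_Icc_of_smul_mulVec_mulVec_eq (hθ : 0 < θ) (hM : ∀ v, 0 ≤ v ⬝ᵥ M *ᵥ v)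
    (hS : ∀ v, 0 ≤ v ⬝ᵥ S *ᵥ v) (hx : x ≠ 0) : lam ∈ Set.Icc (-1) 0 := by
  have hSz := hS (lam • M *ᵥ x + (θ * (1 + lam)) • x)
  rw [dotProduct_mulVec_smul_mulVec_add_smul_eq h, neg_mul, neg_nonneg] at hSz
  have hK : 0 < M *ᵥ x ⬝ᵥ M *ᵥ x + θ ^ 2 * x ⬝ᵥ x := by
    have := dotProduct_self_pos hx
    have : 0 ≤ M *ᵥ x ⬝ᵥ M *ᵥ x := by simpa using dotProduct_star_self_nonneg (M *ᵥ x)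
    positivity
  have hb : 0 ≤ θ * ((1 + lam) ^ 2 + lam ^ 2) * x ⬝ᵥ M *ᵥ x := by
    have := hM x
    positivity
  have hprod : lam * (1 + lam) ≤ 0 :=
    nonpos_of_mul_nonpos_left (by linarith [nonpos_of_mul_nonpos_right hSz hθ]) hK
  constructor <;> nlinarith

end GeneralizedEigenvector

lemma PosSemidef.isUnit_det_add_smul_one {θ : ℝ} {M : Matrix ι ι ℝ} (hM : M.PosSemidef)
    (hθ : 0 < θ) : IsUnit (M + θ • 1).det :=
  (isUnit_iff_isUnit_det _).mp (PosDef.posSemidef_add hM (PosDef.one.smul hθ)).isUnit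

theorem eigenvalue_admmIterationMatrix_mem_Icc {θ lam : ℝ} {M S : Matrix ι ι ℝ} {x : ι → ℝ}
    (hθ : 0 < θ) (hM : M.PosSemidef) (hS : S.PosSemidef) (hx : x ≠ 0)
    (hEig : admmIterationMatrix θ M S *ᵥ x = lam • x) : lam ∈ Set.Icc (-1) 0 := by
  refine mem_Icc_of_smul_mulVec_mulVec_eq ?_ hθ hM.dotProduct_mulVec_nonneg'
    hS.dotProduct_mulVec_nonneg' hx
  calc lam • ((S + θ • 1) *ᵥ ((M + θ • 1) *ᵥ x))
      = (S + θ • 1) *ᵥ ((M + θ • 1) *ᵥ (admmIterationMatrix θ M S *ᵥ x)) := by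
        rw [hEig, mulVec_smul, mulVec_smul]
    _ = -θ • ((M + S) *ᵥ x) := by
        rw [mulVec_mulVec, mulVec_mulVec, mul_assoc, mul_mul_admmIterationMatrix
          (hM.isUnit_det_add_smul_one hθ) (hS.isUnit_det_add_smul_one hθ), smul_mulVec]

end Matrix

/-- Let θ>0, μ>0, A a real m×n matrix and L a real n×n matrix, and define
Q = θ(μAᵀA+θI)⁻¹((LᵀL+θI)⁻¹(θI−μAᵀA) − I). Then every real eigenvalue λ of Q
satisfies −1 ≤ λ ≤ 0. -/
theorem admm_Q_real_eigenvalues_in_Icc {m n : ℕ} (θ μ : ℝ) (hθ : 0 < θ) (hμ : 0 < μ)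
    (A : Matrix (Fin m) (Fin n) ℝ) (L : Matrix (Fin n) (Fin n) ℝ)
    (Q : Matrix (Fin n) (Fin n) ℝ)
    (hQ : Q = θ • ((μ • (Aᵀ * A) + θ • (1 : Matrix (Fin n) (Fin n) ℝ))⁻¹ *
      ((Lᵀ * L + θ • (1 : Matrix (Fin n) (Fin n) ℝ))⁻¹ *
        (θ • (1 : Matrix (Fin n) (Fin n) ℝ) - μ • (Aᵀ * A)) - 1)))
    (lam : ℝ) (x : Fin n → ℝ) (hx : x ≠ 0) (hEig : Q.mulVec x = lam • x) :
    -1 ≤ lam ∧ lam ≤ 0 := by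
  have hA : (μ • (Aᵀ * A)).PosSemidef := (posSemidef_conjTranspose_mul_self A).smul hμ.le
  have hL : (Lᵀ * L).PosSemidef := posSemidef_conjTranspose_mul_self L
  subst hQ
  exact eigenvalue_admmIterationMatrix_mem_Icc hθ hA hL hx hEig
end

section
/- (Theorem 2) Let λ₁, λₙ be real numbers with −1 ≤ λ₁ ≤ λₙ ≤ 0 and λ₁ < 0, and set α* = −2/(λ₁+λₙ). Then for every real α, max(1+αλₙ, −1−αλ₁) ≥ (λ₁−λₙ)/(λ₁+λₙ), with equality when α = α*; that is, α* minimizes the spectral radius ρ(I+αQ) = max(1+αλₙ, −1−αλ₁) of the over-relaxed ADMM iteration matrix, and the minimum value is (λ₁−λₙ)/(λ₁+λₙ). -/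
/-!
With `s = λ₁ + λₙ < 0`, the weights `λ₁ / s` and `λₙ / s` are nonnegative and sum to one, and
they are chosen so that `α` cancels in the corresponding convex combination of `1 + αλₙ` and
`-1 - αλ₁`: the combination is the constant `(λ₁ - λₙ) / s`, and the maximum of the two
branches dominates it for every `α`. At `α* = -2 / s` the two branches coincide, so the bound
is attained.
-/

section RelaxationParameter

variable {lam1 lamn : ℝ}

lemma relaxation_combo_eq (hs : lam1 + lamn ≠ 0) (α : ℝ) :
    lam1 / (lam1 + lamn) * (1 + α * lamn) + lamn / (lam1 + lamn) * (-1 - α * lam1) =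
      (lam1 - lamn) / (lam1 + lamn) := by
  field_simp
  ring

lemma relaxation_lower_bound (h1 : lam1 ≤ 0) (hn : lamn ≤ 0) (hs : lam1 + lamn < 0) (α : ℝ) :
    (lam1 - lamn) / (lam1 + lamn) ≤ max (1 + α * lamn) (-1 - α * lam1) := by
  have hw1 : 0 ≤ lam1 / (lam1 + lamn) := div_nonneg_of_nonpos h1 hs.le
  have hwn : 0 ≤ lamn / (lam1 + lamn) := div_nonneg_of_nonpos hn hs.le
  have hsum : lam1 / (lam1 + lamn) + lamn / (lam1 + lamn) = 1 := by
    rw [← add_div, div_self hs.ne]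
  rw [← relaxation_combo_eq hs.ne α]
  exact Convex.combo_le_max _ _ hw1 hwn hsum

lemma one_add_mul_optimal (hs : lam1 + lamn ≠ 0) :
    1 + -2 / (lam1 + lamn) * lamn = (lam1 - lamn) / (lam1 + lamn) := by
  field_simp
  ring

lemma neg_one_sub_mul_optimal (hs : lam1 + lamn ≠ 0) :
    -1 - -2 / (lam1 + lamn) * lam1 = (lam1 - lamn) / (lam1 + lamn) := by
  field_simp
  ring

end RelaxationParameter

theorem optimal_relaxation_parameter_general (lam1 lamn αstar : ℝ)
    (h2 : lamn ≤ 0) (hneg : lam1 < 0)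
    (hαstar : αstar = -2 / (lam1 + lamn)) :
    (∀ α : ℝ, (lam1 - lamn) / (lam1 + lamn) ≤ max (1 + α * lamn) (-1 - α * lam1)) ∧
    max (1 + αstar * lamn) (-1 - αstar * lam1) = (lam1 - lamn) / (lam1 + lamn) := by
  have hs : lam1 + lamn < 0 := by linarith
  refine ⟨relaxation_lower_bound hneg.le h2 hs, ?_⟩
  rw [hαstar, one_add_mul_optimal hs.ne, neg_one_sub_mul_optimal hs.ne, max_self]

/-- (Theorem 2) Let λ₁, λₙ be real numbers with −1 ≤ λ₁ ≤ λₙ ≤ 0 and λ₁ < 0, and set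
α* = −2/(λ₁+λₙ). Then for every real α, max(1+αλₙ, −1−αλ₁) ≥ (λ₁−λₙ)/(λ₁+λₙ), with
equality when α = α*. -/
theorem optimal_relaxation_parameter (lam1 lamn αstar : ℝ)
    (h1 : -1 ≤ lam1) (h12 : lam1 ≤ lamn) (h2 : lamn ≤ 0) (hneg : lam1 < 0)
    (hαstar : αstar = -2 / (lam1 + lamn)) :
    (∀ α : ℝ, (lam1 - lamn) / (lam1 + lamn) ≤ max (1 + α * lamn) (-1 - α * lam1)) ∧
    max (1 + αstar * lamn) (-1 - αstar * lam1) = (lam1 - lamn) / (lam1 + lamn) :=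
  optimal_relaxation_parameter_general lam1 lamn αstar h2 hneg hαstar
end

section
/- Let λ₁, λₙ be real numbers with −1 ≤ λ₁ ≤ λₙ ≤ 0 and λ₁ < 0. Then (λ₁−λₙ)/(λ₁+λₙ) ≤ max(1+λₙ, −1−λ₁); that is, the spectral radius of I+α*Q with the optimal relaxation parameter α* = −2/(λ₁+λₙ) is no larger than the spectral radius of I+Q (the unrelaxed case α = 1). -/
lemma sub_div_add_le_one_add {a b : ℝ} (hs : a + b < 0) (hb : b ≤ 0) (h : 0 ≤ 2 + a + b) :
    (a - b) / (a + b) ≤ 1 + b := by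
  rw [div_le_iff_of_neg hs]
  have key : (1 + b) * (a + b) = (a - b) + b * (2 + a + b) := by ring
  have hprod : b * (2 + a + b) ≤ 0 := mul_nonpos_of_nonpos_of_nonneg hb h
  linarith

/-- Let λ₁, λₙ be real numbers with −1 ≤ λ₁ ≤ λₙ ≤ 0 and λ₁ < 0. Then
(λ₁−λₙ)/(λ₁+λₙ) ≤ max(1+λₙ, −1−λ₁): the optimally relaxed spectral radius is no larger
than the unrelaxed one. -/
theorem relaxed_radius_le_unrelaxed (lam1 lamn : ℝ)
    (h1 : -1 ≤ lam1) (h12 : lam1 ≤ lamn) (h2 : lamn ≤ 0) (hneg : lam1 < 0) :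
    (lam1 - lamn) / (lam1 + lamn) ≤ max (1 + lamn) (-1 - lam1) :=
  le_max_of_le_left <| sub_div_add_le_one_add (by linarith) h2 (by linarith)
end

section
/- (Theorem 3, ADMM part) Let μ > 0 and define f : (0,∞) → ℝ by f(θ) = −θ(1+μ)/(θ² + μ + θ(1+μ)) for θ < 1 and f(θ) = −1/(θ+1) for θ ≥ 1. If μ ≤ 1, then for all θ > 0, f(θ) ≥ −(1+μ)/(2√μ + 1 + μ), with equality at θ = √μ. If μ > 1, then for all θ > 0, f(θ) ≥ −1/2, with equality at θ = 1. -/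
/-!
On `θ < 1` the function is `-(1 + μ) / (θ + μ / θ + 1 + μ)`, and `θ + μ / θ ≥ 2 √μ` by AM-GM with
equality at `θ = √μ`; on `θ ≥ 1` it is `-1 / (θ + 1) ≥ -1 / 2`. For `μ ≤ 1` the AM-GM value
`-(1 + μ) / (2 √μ + 1 + μ)` lies below `-1 / 2` because `2 √μ ≤ 1 + μ`. For `μ > 1` the first
branch stays above `-1 / 2` on `(0, 1)`, since there `θ² + μ - θ (1 + μ) = (1 - θ) (μ - θ) ≥ 0`.
-/

namespace AdmmDeblurring

variable {μ c θ : ℝ}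

theorem mul_div_sq_add_add_mul_le (hμ : 0 ≤ μ) (hc : 0 < c) (hθ : 0 < θ) :
    θ * c / (θ ^ 2 + μ + θ * c) ≤ c / (2 * √μ + c) := by
  have hsq : √μ ^ 2 = μ := Real.sq_sqrt hμ
  have hamgm : 2 * θ * √μ ≤ θ ^ 2 + μ := by nlinarith [sq_nonneg (θ - √μ)]
  rw [div_le_div_iff₀ (by positivity) (by positivity)]
  nlinarith [mul_le_mul_of_nonneg_left hamgm hc.le]

theorem sqrt_mul_div_sq_add_add_mul (hμ : 0 < μ) :
    √μ * c / (√μ ^ 2 + μ + √μ * c) = c / (2 * √μ + c) := by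
  have hsqrt : 0 < √μ := Real.sqrt_pos.2 hμ
  calc √μ * c / (√μ ^ 2 + μ + √μ * c)
      = √μ * c / (√μ * (2 * √μ + c)) := by
        congr 1
        linear_combination -Real.sq_sqrt hμ.le
    _ = c / (2 * √μ + c) := mul_div_mul_left c _ hsqrt.ne'

theorem half_le_one_add_div_two_sqrt_add (hμ : 0 ≤ μ) :
    1 / 2 ≤ (1 + μ) / (2 * √μ + (1 + μ)) := by
  have hamgm : 2 * √μ ≤ 1 + μ := by nlinarith [sq_nonneg (√μ - 1), Real.sq_sqrt hμ]
  rw [div_le_div_iff₀ two_pos (by positivity)]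
  linarith

theorem mul_one_add_div_le_half (hθ : 0 < θ) (hθ1 : θ ≤ 1) (hμ : 1 ≤ μ) :
    θ * (1 + μ) / (θ ^ 2 + μ + θ * (1 + μ)) ≤ 1 / 2 := by
  rw [div_le_div_iff₀ (by positivity) two_pos]
  nlinarith [mul_nonneg (sub_nonneg.2 hθ1) (sub_nonneg.2 (hθ1.trans hμ))]

end AdmmDeblurring

open AdmmDeblurring in
/-- (Theorem 3, ADMM part) Let μ > 0 and define f on (0,∞) by
f(θ) = −θ(1+μ)/(θ² + μ + θ(1+μ)) for θ < 1 and f(θ) = −1/(θ+1) for θ ≥ 1.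
If μ ≤ 1, then for all θ > 0, f(θ) ≥ −(1+μ)/(2√μ + 1 + μ), with equality at θ = √μ.
If μ > 1, then for all θ > 0, f(θ) ≥ −1/2, with equality at θ = 1. -/
theorem admm_deblurring_optimal_theta (μ : ℝ) (hμ : 0 < μ) (f : ℝ → ℝ)
    (hf : ∀ θ : ℝ, 0 < θ →
      f θ = if θ < 1 then -(θ * (1 + μ)) / (θ ^ 2 + μ + θ * (1 + μ))
            else -1 / (θ + 1)) :
    (μ ≤ 1 →
      (∀ θ : ℝ, 0 < θ → -(1 + μ) / (2 * Real.sqrt μ + 1 + μ) ≤ f θ) ∧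
      f (Real.sqrt μ) = -(1 + μ) / (2 * Real.sqrt μ + 1 + μ)) ∧
    (1 < μ →
      (∀ θ : ℝ, 0 < θ → -(1 / 2) ≤ f θ) ∧ f 1 = -(1 / 2)) := by
  -- the two branches agree at `θ = 1`
  have hf_le_one : ∀ θ, 0 < θ → θ ≤ 1 → f θ = -(θ * (1 + μ) / (θ ^ 2 + μ + θ * (1 + μ))) := by
    intro θ hθ hθ1
    rcases hθ1.lt_or_eq with h | rfl
    · rw [hf θ hθ, if_pos h, neg_div]
    · rw [hf 1 one_pos, if_neg (lt_irrefl 1)]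
      field_simp
  have hf_ge_one : ∀ θ, 1 ≤ θ → f θ = -(1 / (θ + 1)) := fun θ h => by
    rw [hf θ (one_pos.trans_le h), if_neg (not_lt.2 h), neg_div]
  have hhalf_le : ∀ θ : ℝ, 1 ≤ θ → 1 / (θ + 1) ≤ 1 / 2 := fun θ h => by
    rw [div_le_div_iff₀ (by linarith) two_pos]
    linarith
  have hvalue : -(1 + μ) / (2 * √μ + 1 + μ) = -((1 + μ) / (2 * √μ + (1 + μ))) := by
    rw [neg_div, add_assoc]
  refine ⟨fun hμ1 => ⟨fun θ hθ => ?_, ?_⟩, fun hμ1 => ⟨fun θ hθ => ?_, ?_⟩⟩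
  · rw [hvalue]
    rcases lt_or_ge θ 1 with h | h
    · rw [hf_le_one θ hθ h.le]
      exact neg_le_neg (mul_div_sq_add_add_mul_le hμ.le (by positivity) hθ)
    · rw [hf_ge_one θ h]
      exact neg_le_neg ((hhalf_le θ h).trans (half_le_one_add_div_two_sqrt_add hμ.le))
  · rw [hvalue, hf_le_one _ (Real.sqrt_pos.2 hμ) (Real.sqrt_le_one.2 hμ1),
      sqrt_mul_div_sq_add_add_mul hμ]
  · rcases lt_or_ge θ 1 with h | h
    · rw [hf_le_one θ hθ h.le]
      exact neg_le_neg (mul_one_add_div_le_half hθ h.le hμ1.le)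
    · rw [hf_ge_one θ h]
      exact neg_le_neg (hhalf_le θ h)
  · rw [hf_ge_one 1 le_rfl]
    norm_num
end

section
/- (Theorem 3, over-relaxed part) Let μ > 0 and for θ > 0 set v₁(θ) = −θ(1+μ)/(θ² + μ + θ(1+μ)) and v₂(θ) = −1/(θ+1), and let m(θ) = min(v₁(θ), v₂(θ)) and M(θ) = max(v₁(θ), v₂(θ)). Then for every θ > 0, (m(θ) − M(θ))/(m(θ) + M(θ)) = |θ−1|·μ/(2θ + μ + θμ); consequently this quantity is minimized over θ > 0 exactly at θ* = 1 with minimum value 0, and the corresponding optimal relaxation parameter is α* = −2/(v₁(1) + v₂(1)) = 2. -/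
/-!
Over the common denominator `(θ + 1)(θ + μ)` of the extreme eigenvalues,
`v₁ - v₂ = μ(1 - θ)/((θ + 1)(θ + μ))` and `v₁ + v₂ = -(2θ + μ + θμ)/((θ + 1)(θ + μ))`.
Since `(min - max)/(min + max) = -|v₁ - v₂|/(v₁ + v₂)`, the denominators cancel and the
spectral radius is `|θ - 1|μ/(2θ + μ + θμ)`, which is nonnegative and vanishes only at `θ = 1`.
-/

theorem min_sub_max_div_min_add_max {α : Type*} [Field α] [LinearOrder α]
    [IsStrictOrderedRing α] (a b : α) :
    (min a b - max a b) / (min a b + max a b) = -|a - b| / (a + b) := by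
  rw [← max_sub_min_eq_abs', min_add_max, neg_sub]

section Deblurring

variable {μ θ : ℝ}

theorem deblurring_eigenvalue_sub (hμ : 0 < μ) (hθ : 0 < θ) :
    -(θ * (1 + μ)) / (θ ^ 2 + μ + θ * (1 + μ)) - -1 / (θ + 1) =
      μ * (1 - θ) / ((θ + 1) * (θ + μ)) := by
  have : θ ^ 2 + μ + θ * (1 + μ) = (θ + 1) * (θ + μ) := by ring
  rw [this]
  field_simp
  ring

theorem deblurring_eigenvalue_add (hμ : 0 < μ) (hθ : 0 < θ) :
    -(θ * (1 + μ)) / (θ ^ 2 + μ + θ * (1 + μ)) + -1 / (θ + 1) =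
      -((2 * θ + μ + θ * μ) / ((θ + 1) * (θ + μ))) := by
  have : θ ^ 2 + μ + θ * (1 + μ) = (θ + 1) * (θ + μ) := by ring
  rw [this]
  field_simp
  ring

theorem deblurring_spectral_radius_eq (hμ : 0 < μ) (hθ : 0 < θ) :
    -|-(θ * (1 + μ)) / (θ ^ 2 + μ + θ * (1 + μ)) - -1 / (θ + 1)| /
        (-(θ * (1 + μ)) / (θ ^ 2 + μ + θ * (1 + μ)) + -1 / (θ + 1)) =
      |θ - 1| * μ / (2 * θ + μ + θ * μ) := by
  have hP : 0 < (θ + 1) * (θ + μ) := by positivity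
  rw [deblurring_eigenvalue_sub hμ hθ, deblurring_eigenvalue_add hμ hθ, abs_div, abs_mul,
    abs_of_pos hμ, abs_of_pos hP, abs_sub_comm, neg_div_neg_eq,
    div_div_div_cancel_right₀ hP.ne', mul_comm]

end Deblurring

/-- (Theorem 3, over-relaxed part) Let μ > 0 and for θ > 0 set
v₁(θ) = −θ(1+μ)/(θ² + μ + θ(1+μ)) and v₂(θ) = −1/(θ+1), with m(θ) = min(v₁(θ), v₂(θ))
and M(θ) = max(v₁(θ), v₂(θ)). Then for every θ > 0,
(m(θ) − M(θ))/(m(θ) + M(θ)) = |θ−1|·μ/(2θ + μ + θμ); consequently this quantity is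
minimized over θ > 0 exactly at θ* = 1 with minimum value 0, and the corresponding
optimal relaxation parameter is α* = −2/(v₁(1) + v₂(1)) = 2. -/
theorem overrelaxed_deblurring_optimal_parameters (μ : ℝ) (hμ : 0 < μ)
    (v₁ v₂ m M : ℝ → ℝ)
    (hv₁ : ∀ θ : ℝ, 0 < θ → v₁ θ = -(θ * (1 + μ)) / (θ ^ 2 + μ + θ * (1 + μ)))
    (hv₂ : ∀ θ : ℝ, 0 < θ → v₂ θ = -1 / (θ + 1))
    (hm : ∀ θ : ℝ, 0 < θ → m θ = min (v₁ θ) (v₂ θ))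
    (hM : ∀ θ : ℝ, 0 < θ → M θ = max (v₁ θ) (v₂ θ)) :
    (∀ θ : ℝ, 0 < θ →
      (m θ - M θ) / (m θ + M θ) = |θ - 1| * μ / (2 * θ + μ + θ * μ)) ∧
    (∀ θ : ℝ, 0 < θ → (m 1 - M 1) / (m 1 + M 1) ≤ (m θ - M θ) / (m θ + M θ)) ∧
    (∀ θ : ℝ, 0 < θ →
      (m θ - M θ) / (m θ + M θ) = (m 1 - M 1) / (m 1 + M 1) → θ = 1) ∧
    (m 1 - M 1) / (m 1 + M 1) = 0 ∧
    -2 / (v₁ 1 + v₂ 1) = 2 := by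
  have radius : ∀ θ : ℝ, 0 < θ →
      (m θ - M θ) / (m θ + M θ) = |θ - 1| * μ / (2 * θ + μ + θ * μ) := by
    intro θ hθ
    rw [hm θ hθ, hM θ hθ, min_sub_max_div_min_add_max, hv₁ θ hθ, hv₂ θ hθ]
    exact deblurring_spectral_radius_eq hμ hθ
  have radius_one : (m 1 - M 1) / (m 1 + M 1) = 0 := by simp [radius 1 one_pos]
  refine ⟨radius, fun θ hθ => ?_, fun θ hθ h => ?_, radius_one, ?_⟩
  · rw [radius_one, radius θ hθ]
    positivity
  · rw [radius_one, radius θ hθ] at h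
    have : 0 < 2 * θ + μ + θ * μ := by positivity
    simpa [hμ.ne', this.ne', sub_eq_zero] using h
  · have hsum : v₁ 1 + v₂ 1 = -1 := by
      rw [hv₁ 1 one_pos, hv₂ 1 one_pos, deblurring_eigenvalue_add hμ one_pos]
      field_simp
      ring
    rw [hsum]
    norm_num
end

section
/- Let μ > 0 and θ > 0, and define h : (0,∞) → ℝ by h(g) = −θ(g+μ)/(θ² + (μ+θ)g + θμ). If θ < μ then h is strictly increasing on (0,∞); if θ > μ then h is strictly decreasing on (0,∞); and if θ = μ then h is constantly equal to −1/2. -/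
/-! The denominator factors as `θ² + (μ + θ) g + θ μ = (μ + θ)(g + θ)`, so
`h g = -θ/(μ + θ) - θ(μ - θ)/(μ + θ) · (g + θ)⁻¹`: an affine function of the strictly
decreasing `(g + θ)⁻¹`, whose slope has the sign of `θ - μ` and vanishes when `θ = μ`. -/

open Set

lemma neg_mul_add_div_eq_sub_mul_inv {K : Type*} [Field K] {μ θ g : K} (hμθ : μ + θ ≠ 0)
    (hg : g + θ ≠ 0) :
    -(θ * (g + μ)) / (θ ^ 2 + (μ + θ) * g + θ * μ) =
      -θ / (μ + θ) - θ * (μ - θ) / (μ + θ) * (g + θ)⁻¹ := by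
  rw [show θ ^ 2 + (μ + θ) * g + θ * μ = (μ + θ) * (g + θ) by ring]
  field_simp
  ring

section

variable {K : Type*} [Field K] [LinearOrder K] [IsStrictOrderedRing K]

lemma strictAntiOn_inv_add (θ : K) : StrictAntiOn (fun g : K => (g + θ)⁻¹) (Ioi (-θ)) :=
  fun _ ha _ hb hab => inv_strictAntiOn (mem_Ioi.mpr (neg_lt_iff_pos_add.mp ha))
    (mem_Ioi.mpr (neg_lt_iff_pos_add.mp hb)) (add_lt_add_left hab θ)

lemma strictMonoOn_sub_mul_inv_add {c : K} (hc : 0 < c) (a θ : K) :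
    StrictMonoOn (fun g : K => a - c * (g + θ)⁻¹) (Ioi (-θ)) :=
  fun _ hx _ hy hxy =>
    sub_lt_sub_left (mul_lt_mul_of_pos_left (strictAntiOn_inv_add θ hx hy hxy) hc) a

lemma strictAntiOn_sub_mul_inv_add {c : K} (hc : c < 0) (a θ : K) :
    StrictAntiOn (fun g : K => a - c * (g + θ)⁻¹) (Ioi (-θ)) :=
  fun _ hx _ hy hxy =>
    sub_lt_sub_left (mul_lt_mul_of_neg_left (strictAntiOn_inv_add θ hx hy hxy) hc) a

end

/-- Let μ > 0 and θ > 0, and define h on (0,∞) by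
h(g) = −θ(g+μ)/(θ² + (μ+θ)g + θμ). If θ < μ then h is strictly increasing on (0,∞);
if θ > μ then h is strictly decreasing on (0,∞); and if θ = μ then h is constantly
equal to −1/2. -/
theorem mri_eigenvalue_monotonicity (μ θ : ℝ) (hμ : 0 < μ) (hθ : 0 < θ)
    (h : ℝ → ℝ)
    (hh : ∀ g : ℝ, 0 < g →
      h g = -(θ * (g + μ)) / (θ ^ 2 + (μ + θ) * g + θ * μ)) :
    (θ < μ → StrictMonoOn h (Set.Ioi (0 : ℝ))) ∧
    (μ < θ → StrictAntiOn h (Set.Ioi (0 : ℝ))) ∧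
    (θ = μ → ∀ g : ℝ, 0 < g → h g = -(1 / 2)) := by
  have hμθ : 0 < μ + θ := add_pos hμ hθ
  have hform :
      EqOn (fun g => -θ / (μ + θ) - θ * (μ - θ) / (μ + θ) * (g + θ)⁻¹) h (Ioi 0) :=
    fun g hg => ((hh g hg).trans
      (neg_mul_add_div_eq_sub_mul_inv hμθ.ne' (add_pos (mem_Ioi.mp hg) hθ).ne')).symm
  have hsub : Ioi (0 : ℝ) ⊆ Ioi (-θ) := Ioi_subset_Ioi (neg_nonpos.mpr hθ.le)
  refine ⟨fun hlt => ?_, fun hlt => ?_, fun heq g hg => ?_⟩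
  · have hc : 0 < θ * (μ - θ) / (μ + θ) := div_pos (mul_pos hθ (sub_pos.mpr hlt)) hμθ
    exact ((strictMonoOn_sub_mul_inv_add hc _ θ).mono hsub).congr hform
  · have hc : θ * (μ - θ) / (μ + θ) < 0 :=
      div_neg_of_neg_of_pos (mul_neg_of_pos_of_neg hθ (sub_neg.mpr hlt)) hμθ
    exact ((strictAntiOn_sub_mul_inv_add hc _ θ).mono hsub).congr hform
  · rw [← hform hg, heq]
    simp only [sub_self, mul_zero, zero_div, zero_mul, sub_zero]
    rw [← two_mul, neg_div, div_mul_cancel_right₀ hμ.ne', one_div]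
end
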